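/- The determinant of the (k+1)×(k+1) tridiagonal matrix B_k with diagonal entries all equal to 2, first superdiagonal entry 1 and last subdiagonal entry 1, and all other superdiagonal entries -1 and all other subdiagonal entries -1 (i.e., B_k[0][1]=1, B_k[k][k-1]=1, B_k[i][i+1]=-1 for 1≤i≤k-1, B_k[i][i-1]=-1 for 1≤i≤k-1, B_k[i][i]=2 for all i), equals 9k-6 for every integer k > 0. -/

import Mathlib

/-!
Expanding a tridiagonal determinant along its last row gives the continuant recurrence
`Dₙ₊₂ = aₙ₊₁ Dₙ₊₁ - bₙ cₙ Dₙ` for its leading principal minors. The proper leading minors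
of `B_k` do not see the corner entry `B_k[k][k-1] = 1`; they satisfy `D₁ = 2`, `D₂ = 5` and
`Dₘ₊₂ = 2 Dₘ₊₁ - Dₘ` for `m ≥ 1`, so `Dₘ = 3m - 1` for `m ≥ 1`. One last step of the
recurrence, now with `cₖ₋₁ = 1`, gives `det B_k = 2 (3k - 1) + (3k - 4) = 9k - 6` for
`k ≥ 2`, and `det B_1 = 4 - 1 = 3`.
-/

open Matrix

variable {R : Type*} [CommRing R]

def tridiagonal (a b c : ℕ → R) (n : ℕ) : Matrix (Fin n) (Fin n) R :=
  of fun i j =>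
    if (i : ℕ) = j then a i
    else if (j : ℕ) = i + 1 then b i
    else if (i : ℕ) = j + 1 then c j
    else 0

theorem det_eq_mul_det_submatrix_castSucc {n : ℕ} (M : Matrix (Fin (n + 1)) (Fin (n + 1)) R)
    (h : ∀ i : Fin n, M i.castSucc (Fin.last n) = 0) :
    M.det = M (Fin.last n) (Fin.last n) * (M.submatrix Fin.castSucc Fin.castSucc).det := by
  rw [det_succ_column M (Fin.last n), Fin.sum_univ_castSucc]
  simp [h]

namespace tridiagonal

variable (a b c : ℕ → R)

theorem submatrix_castSucc (n : ℕ) :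
    (tridiagonal a b c (n + 1)).submatrix Fin.castSucc Fin.castSucc = tridiagonal a b c n := by
  ext i j
  simp [tridiagonal]

theorem det_zero : (tridiagonal a b c 0).det = 1 := det_isEmpty

theorem det_one : (tridiagonal a b c 1).det = a 0 := by
  simp [tridiagonal]

theorem congr_subdiagonal {n : ℕ} {c' : ℕ → R} (h : ∀ i, i + 1 < n → c i = c' i) :
    tridiagonal a b c n = tridiagonal a b c' n := by
  ext i j
  simp only [tridiagonal, of_apply]
  split_ifs <;> first | rfl | (apply h; omega)

/-- The minor of the entry `cₙ` in the last row of `tridiagonal a b c (n + 2)`: its last column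
is zero except for `bₙ` in the corner. -/
theorem det_submatrix_castSucc_succAbove_last (n : ℕ) :
    ((tridiagonal a b c (n + 2)).submatrix Fin.castSucc
      (Fin.last n).castSucc.succAbove).det = b n * (tridiagonal a b c n).det := by
  rw [det_eq_mul_det_submatrix_castSucc _ fun i => ?_]
  · have corner : (Fin.last n).castSucc.succAbove (Fin.last n) = Fin.last (n + 1) :=
      Fin.succAbove_castSucc_self _
    have inner : ((tridiagonal a b c (n + 2)).submatrix Fin.castSucc
        (Fin.last n).castSucc.succAbove).submatrix Fin.castSucc Fin.castSucc =
          tridiagonal a b c n := by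
      ext i j
      simp only [submatrix_apply, Fin.succAbove_castSucc_of_lt _ _ (Fin.castSucc_lt_last j)]
      simp [tridiagonal]
    rw [inner, submatrix_apply, corner]
    simp [tridiagonal]
  · rw [submatrix_apply, Fin.succAbove_castSucc_self]
    have := i.isLt
    simp only [tridiagonal, of_apply, Fin.val_castSucc, Fin.succ_last, Fin.val_last]
    split_ifs <;> first | rfl | omega

theorem det_succ_succ (n : ℕ) :
    (tridiagonal a b c (n + 2)).det =
      a (n + 1) * (tridiagonal a b c (n + 1)).det - b n * c n * (tridiagonal a b c n).det := by
  have far (j : Fin n) : tridiagonal a b c (n + 2) (Fin.last _) j.castSucc.castSucc = 0 := by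
    have := j.isLt
    simp only [tridiagonal, of_apply, Fin.val_last, Fin.val_castSucc]
    split_ifs <;> first | rfl | omega
  have diag : tridiagonal a b c (n + 2) (Fin.last _) (Fin.last _) = a (n + 1) := by
    simp [tridiagonal]
  have sub : tridiagonal a b c (n + 2) (Fin.last _) (Fin.last n).castSucc = c n := by
    simp only [tridiagonal, of_apply, Fin.val_last, Fin.val_castSucc]
    split_ifs <;> first | rfl | omega
  rw [det_succ_row _ (Fin.last (n + 1)), Fin.sum_univ_castSucc, Fin.sum_univ_castSucc,
    Finset.sum_eq_zero fun j _ => by rw [far, mul_zero, zero_mul]]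
  simp only [zero_add, Fin.succAbove_last, submatrix_castSucc,
    det_submatrix_castSucc_succAbove_last, diag, sub, Fin.val_last, Fin.val_castSucc]
  rw [Odd.neg_one_pow ⟨n, by ring⟩, Even.neg_one_pow ⟨n + 1, by ring⟩]
  ring

end tridiagonal

/-- The superdiagonal of `B_k`. -/
def superdiagB (i : ℕ) : ℤ := if i = 0 then 1 else -1

theorem det_tridiagonal_superdiagB (m : ℕ) :
    (tridiagonal (fun _ => 2) superdiagB (fun _ => -1) (m + 1)).det = 3 * m + 2 := by
  induction m using Nat.twoStepInduction with
  | zero => simp [tridiagonal]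
  | one =>
    rw [tridiagonal.det_succ_succ, tridiagonal.det_one, tridiagonal.det_zero]
    simp [superdiagB]
  | more m ih₀ ih₁ =>
    rw [tridiagonal.det_succ_succ, ih₀, ih₁]
    simp [superdiagB]
    ring

theorem stmt0 (k : ℕ) (hk : 0 < k) :
    Matrix.det (Matrix.of (fun i j : Fin (k+1) =>
      if i.val = j.val then (2 : ℤ)
      else if i.val = 0 ∧ j.val = 1 then 1
      else if i.val = k ∧ j.val = k - 1 then 1
      else if j.val = i.val + 1 then -1
      else if i.val = j.val + 1 then -1
      else 0)) = 9 * k - 6 := by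
  obtain ⟨m, rfl⟩ : ∃ m, k = m + 1 := ⟨k - 1, by omega⟩
  set c : ℕ → ℤ := fun i => if i = m then 1 else -1
  have leading (n : ℕ) (hn : n ≤ m + 1) : tridiagonal (fun _ => 2) superdiagB c n =
      tridiagonal (fun _ => 2) superdiagB (fun _ => -1) n :=
    tridiagonal.congr_subdiagonal _ _ _ fun i hi => if_neg (by omega)
  calc _ = (tridiagonal (fun _ => 2) superdiagB c (m + 2)).det := by
          congr 1
          ext i j
          simp only [tridiagonal, superdiagB, c, of_apply]
          split_ifs <;> first | rfl | omega
    _ = 2 * (3 * m + 2) -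
          superdiagB m * (tridiagonal (fun _ => 2) superdiagB (fun _ => -1) m).det := by
          rw [tridiagonal.det_succ_succ, leading _ le_rfl, leading _ (by omega),
            det_tridiagonal_superdiagB]
          simp [c]
    _ = 9 * (m + 1 : ℕ) - 6 := by
          rcases m with _ | m
          · simp [superdiagB]
          · rw [det_tridiagonal_superdiagB]
            simp [superdiagB]
            ring
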